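/- Let V be a module over the Lie algebra sl(2,ℂ), let n be an integer, and let v ∈ V be a vector such that h ⋅ v = n • v and such that the family (e^k ⋅ v)_{k ∈ ℕ} (iterated action of e on v) is a basis of V as a complex vector space. Then f ⋅ v = 0, i.e., v is a lowest weight vector. (This is the statement that the irreducible lowest weight module δ(n), being a free ℂ[e]-module generated by its lowest weight vector, is annihilated by f at that vector.) -/

import Mathlib

open LieAlgebra.SpecialLinear

/-- The element `e = E₁₂` of `sl(2,ℂ)`. -/
noncomputable def sl2e : sl (Fin 2) ℂ := single 0 1 (by decide) (1 : ℂ)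

/-- The element `f = E₂₁` of `sl(2,ℂ)`. -/
noncomputable def sl2f : sl (Fin 2) ℂ := single 1 0 (by decide) (1 : ℂ)

/-- The element `h = E₁₁ - E₂₂ = [e,f]` of `sl(2,ℂ)`. -/
noncomputable def sl2h : sl (Fin 2) ℂ := ⁅sl2e, sl2f⁆

/-- `[h, e] = 2 e` in `sl(2,ℂ)`. -/
lemma sl2_he : ⁅sl2h, sl2e⁆ = (2:ℂ) • sl2e := by
  apply Subtype.ext
  show _ * _ - _ * _ = (2:ℂ) • _
  simp only [sl2h, sl2e, sl2f, sl_bracket, val_single]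
  ext i j
  fin_cases i <;> fin_cases j <;>
    simp [Matrix.mul_apply, Matrix.single, Fin.sum_univ_two] <;> norm_num

/-- `[h, f] = -2 f` in `sl(2,ℂ)`. -/
lemma sl2_hf : ⁅sl2h, sl2f⁆ = (-2:ℂ) • sl2f := by
  apply Subtype.ext
  show _ * _ - _ * _ = (-2:ℂ) • _
  simp only [sl2h, sl2e, sl2f, sl_bracket, val_single]
  ext i j
  fin_cases i <;> fin_cases j <;>
    simp [Matrix.mul_apply, Matrix.single, Fin.sum_univ_two] <;> norm_num

/-- If `v` is an `h`-eigenvector of weight `n` in an `sl(2,ℂ)`-module `V` such that the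
iterates `e^k ⋅ v` form a `ℂ`-basis of `V`, then `f ⋅ v = 0`. -/
theorem lowest_weight_vector_annihilated
    (V : Type*) [AddCommGroup V] [Module ℂ V]
    [LieRingModule (sl (Fin 2) ℂ) V] [LieModule ℂ (sl (Fin 2) ℂ) V]
    (n : ℤ) (v : V) (hv : ⁅sl2h, v⁆ = n • v)
    (B : Module.Basis ℕ ℂ V)
    (hB : ∀ k : ℕ, B k = ((LieModule.toEnd ℂ (sl (Fin 2) ℂ) V sl2e) ^ k) v) :
    ⁅sl2f, v⁆ = 0 := by
  have hv' : ⁅sl2h, v⁆ = (n:ℂ) • v := by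
    rw [hv, Int.cast_smul_eq_zsmul]
  -- each basis vector `B k = e^k ⋅ v` is an `h`-eigenvector of weight `n + 2k`
  have eig : ∀ k : ℕ, ⁅sl2h, B k⁆ = ((n:ℂ) + 2*k) • B k := by
    intro k
    induction k with
    | zero => simpa [hB 0] using hv'
    | succ k ih =>
      have hBk : B (k+1) = ⁅sl2e, B k⁆ := by
        rw [hB (k+1), hB k, pow_succ']
        rfl
      rw [hBk, leibniz_lie, sl2_he, smul_lie, ih, lie_smul, ← hBk]
      push_cast
      rw [← add_smul]
      ring_nf
  -- `h` acts on `f ⋅ v` with eigenvalue `n - 2`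
  have hfv : ⁅sl2h, ⁅sl2f, v⁆⁆ = ((n:ℂ) - 2) • ⁅sl2f, v⁆ := by
    rw [leibniz_lie, sl2_hf, smul_lie, hv', lie_smul, sub_smul]
    module
  -- coefficient extraction
  set φ := LieModule.toEnd ℂ (sl (Fin 2) ℂ) V sl2h with hφ
  have hcoord : ∀ k : ℕ, (B.coord k).comp φ = ((n:ℂ) + 2*k) • B.coord k := by
    intro k
    apply B.ext
    intro j
    simp only [LinearMap.comp_apply, LinearMap.smul_apply, hφ,
      LieModule.toEnd_apply_apply, eig j, map_smul]
    rcases eq_or_ne j k with rfl | hjk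
    · rfl
    · simp [Module.Basis.coord_apply, Module.Basis.repr_self_apply, hjk]
  have hc : ∀ k : ℕ, B.repr ⁅sl2f, v⁆ k = 0 := by
    intro k
    have h1 : (B.coord k).comp φ ⁅sl2f, v⁆ = ((n:ℂ) + 2*k) * B.repr ⁅sl2f, v⁆ k := by
      rw [hcoord k]; simp [Module.Basis.coord_apply, smul_eq_mul]
    have h2 : (B.coord k).comp φ ⁅sl2f, v⁆ = ((n:ℂ) - 2) * B.repr ⁅sl2f, v⁆ k := by
      simp only [LinearMap.comp_apply, hφ, LieModule.toEnd_apply_apply, hfv, map_smul,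
        Module.Basis.coord_apply]
      simp [smul_eq_mul]
    have h3 : ((n:ℂ) + 2*k - ((n:ℂ) - 2)) * B.repr ⁅sl2f, v⁆ k = 0 := by
      rw [sub_mul, ← h1, ← h2, sub_self]
    have h4 : ((n:ℂ) + 2*k - ((n:ℂ) - 2)) ≠ 0 := by
      have : ((n:ℂ) + 2*k - ((n:ℂ) - 2)) = 2*(k+1) := by ring
      rw [this]
      have hk : ((k:ℂ)+1) ≠ 0 := Nat.cast_add_one_ne_zero k
      exact mul_ne_zero two_ne_zero hk
    exact (mul_eq_zero.mp h3).resolve_left h4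
  have : B.repr ⁅sl2f, v⁆ = 0 := Finsupp.ext hc
  simpa using congrArg B.repr.symm this
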